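/- Let F be the forest induced by a most parsimonious extension of a character χ to an X-tree T. Then χ is convex on T (i.e., ℓ(T,χ) = |χ| − 1) if and only if every state of χ is assigned to exactly one component of F. -/

import Mathlib

open SimpleGraph

namespace PhyloMP

/-- The set of mutation edges of a vertex coloring `ω` of a graph:
edges whose two endpoints receive different states. -/
def mutationEdges {V C : Type} (g : SimpleGraph V) (ω : V → C) : Set (Sym2 V) :=
  {e | e ∈ g.edgeSet ∧ ∃ u v : V, e = s(u, v) ∧ ω u ≠ ω v}

/-- An unrooted binary phylogenetic tree on taxon set `X`, with vertex set `V`: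
a tree whose degree-1 vertices (leaves) are bijectively labeled by `X` and whose
other vertices have degree 3. -/
structure XTree (X V : Type) [Fintype V] where
  g : SimpleGraph V
  isTree : g.IsTree
  leaf : X → V
  leafInj : Function.Injective leaf
  leafDeg : ∀ x, (g.neighborSet (leaf x)).ncard = 1
  leavesOnly : ∀ v, (g.neighborSet v).ncard = 1 → ∃ x, leaf x = v
  internalDeg : ∀ v, (g.neighborSet v).ncard ≠ 1 → (g.neighborSet v).ncard = 3

variable {X V C : Type} [Fintype V]

/-- `ω` extends the character `χ` to all vertices of `T`. -/
def IsExtension (T : XTree X V) (χ : X → C) (ω : V → C) : Prop :=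
  ∀ x, ω (T.leaf x) = χ x

/-- The parsimony score `ℓ(T,χ)`: the minimum number of mutation edges over
all extensions of `χ` to `T`. -/
noncomputable def score (T : XTree X V) (χ : X → C) : ℕ :=
  sInf {n | ∃ ω : V → C, IsExtension T χ ω ∧ (mutationEdges T.g ω).ncard = n}

/-- A most parsimonious extension. -/
def IsMPExtension (T : XTree X V) (χ : X → C) (ω : V → C) : Prop :=
  IsExtension T χ ω ∧ (mutationEdges T.g ω).ncard = score T χ

/-- `|χ|`: the number of states used by the character `χ`. -/
noncomputable def nStates {X C : Type} (χ : X → C) : ℕ := (Set.range χ).ncard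

/-- `χ` is convex on `T`: its parsimony score equals its number of states minus one. -/
def IsConvex (T : XTree X V) (χ : X → C) : Prop := score T χ = nStates χ - 1

/-- The maximum parsimony distance between two `X`-trees. -/
noncomputable def dMP {V₁ V₂ : Type} [Fintype V₁] [Fintype V₂]
    (T₁ : XTree X V₁) (T₂ : XTree X V₂) : ℕ :=
  sSup {d | ∃ χ : X → ℕ, Nat.dist (score T₁ χ) (score T₂ χ) = d}

/-- A character achieving the maximum parsimony distance. -/
def IsOptimal {V₁ V₂ : Type} [Fintype V₁] [Fintype V₂]
    (T₁ : XTree X V₁) (T₂ : XTree X V₂) (χ : X → C) : Prop :=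
  Nat.dist (score T₁ χ) (score T₂ χ) = dMP T₁ T₂

/-- The forest induced by an extension `ω`: delete all mutation edges of `ω` from `T`. -/
noncomputable def forest (T : XTree X V) (ω : V → C) : SimpleGraph V :=
  T.g.deleteEdges (mutationEdges T.g ω)

/-- A connected component `c` of the forest `F` carries the state `s`. -/
def carries {V C : Type} (F : SimpleGraph V) (ω : V → C) (c : F.ConnectedComponent) (s : C) : Prop :=
  ∃ v, F.connectedComponentMk v = c ∧ ω v = s

/-- The number of components of `F` carrying the state `s`. A state is *unique*
if this is 1 and *repeating* if this is at least 2. -/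
noncomputable def stateMultiplicity {V C : Type} (F : SimpleGraph V) (ω : V → C) (s : C) : ℕ :=
  {c : F.ConnectedComponent | carries F ω c s}.ncard

/-- Relabel the state `A` as `B` in the character `χ`. -/
def relabel {X C : Type} [DecidableEq C] (χ : X → C) (A B : C) : X → C :=
  fun x => if χ x = A then B else χ x

/-- Two states `A`, `B` are adjacent (with respect to the coloring `ω`) if some edge of the
graph joins a vertex colored `A` to a vertex colored `B`; for distinct states, this edge is a
mutation edge joining the corresponding components of the induced forest. -/
def statesAdjacent {V C : Type} (g : SimpleGraph V) (ω : V → C) (A B : C) : Prop :=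
  ∃ u v, g.Adj u v ∧ ω u = A ∧ ω v = B

end PhyloMP

/-!
Deleting `k` edges from a finite tree leaves a forest with `k + 1` components, so the forest `F`
of a most parsimonious extension `ω` has `ℓ(T,χ) + 1` components. Each component of `F` contains
a leaf: otherwise recoloring a leafless component with the state of a neighbouring one would
remove a mutation edge without creating any. So the states carried by the components of `F` are
exactly the states of `χ`, and `ℓ(T,χ) + 1 = |χ|` says that no state is carried by two of them.
-/

namespace SimpleGraph

variable {V : Type} {G : SimpleGraph V}

theorem Reachable.eq_of_forall_adj {β : Type*} {f : V → β}
    (hf : ∀ a b, G.Adj a b → f a = f b) {u v : V} (h : G.Reachable u v) : f u = f v := by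
  obtain ⟨p⟩ := h
  induction p with
  | nil => rfl
  | cons hadj _ ih => exact (hf _ _ hadj).trans ih

theorem Connected.card_connectedComponent (hG : G.Connected) :
    Nat.card G.ConnectedComponent = 1 := by
  have := hG.nonempty
  have := hG.preconnected.subsingleton_connectedComponent
  exact Nat.card_unique

theorem card_connectedComponent_deleteEdges_of_isBridge [Finite V] {u v : V} (huv : G.Adj u v)
    (hb : G.IsBridge s(u, v)) :
    Nat.card (G.deleteEdges {s(u, v)}).ConnectedComponent = Nat.card G.ConnectedComponent + 1 := by
  classical
  set H := G.deleteEdges {s(u, v)}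
  -- Above every `G`-component lies exactly one `H`-component other than that of `v`; `f` picks it.
  let f : V → H.ConnectedComponent := fun a =>
    if H.Reachable a v then H.connectedComponentMk u else H.connectedComponentMk a
  have hf : ∀ a b, G.Adj a b → f a = f b := by
    intro a b hab
    by_cases he : s(a, b) = s(u, v)
    · have hu : f u = H.connectedComponentMk u := by simp [f]
      have hv : f v = H.connectedComponentMk u := by simp [f]
      rcases Sym2.eq_iff.mp he with ⟨rfl, rfl⟩ | ⟨rfl, rfl⟩ <;> simp only [hu, hv]
    · have hab' : H.Adj a b := by simpa [H, he] using hab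
      have hreach : H.Reachable a v ↔ H.Reachable b v :=
        ⟨hab'.symm.reachable.trans, hab'.reachable.trans⟩
      simp only [f, hreach, ConnectedComponent.eq.mpr hab'.reachable]
  let Φ : G.ConnectedComponent → H.ConnectedComponent :=
    ConnectedComponent.lift f fun a b p _ => p.reachable.eq_of_forall_adj hf
  let π : H.ConnectedComponent → G.ConnectedComponent :=
    ConnectedComponent.map (Hom.ofLE (deleteEdges_le _))
  have hΦ_ne : ∀ c, Φ c ≠ H.connectedComponentMk v := by
    refine ConnectedComponent.ind fun a => ?_
    by_cases ha : H.Reachable a v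
    · simpa [Φ, f, ha] using isBridge_iff.mp hb
    · simp [Φ, f, ha]
  have hπΦ : ∀ c, π (Φ c) = c := by
    refine ConnectedComponent.ind fun a => ?_
    by_cases ha : H.Reachable a v
    · simpa [Φ, f, π, ha] using huv.reachable.trans (ha.mono (deleteEdges_le _)).symm
    · simp [Φ, f, π, ha]
  have hΦπ : ∀ c, c ≠ H.connectedComponentMk v → Φ (π c) = c := by
    refine ConnectedComponent.ind fun a ha => ?_
    have ha : ¬H.Reachable a v := by simpa using ha
    simp [Φ, f, π, ha]
  let e : {c // c ≠ H.connectedComponentMk v} ≃ G.ConnectedComponent :=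
    ⟨fun c => π c, fun c => ⟨Φ c, hΦ_ne c⟩, fun c => Subtype.ext (hΦπ c c.2), hπΦ⟩
  rw [Nat.card_congr (Equiv.optionSubtypeNe _).symm, Finite.card_option, Nat.card_congr e]

theorem IsAcyclic.card_connectedComponent_deleteEdges [Finite V] (hG : G.IsAcyclic)
    {s : Set (Sym2 V)} (hs : s ⊆ G.edgeSet) :
    Nat.card (G.deleteEdges s).ConnectedComponent = Nat.card G.ConnectedComponent + s.ncard := by
  induction s, s.toFinite using Set.Finite.induction_on with
  | empty => simp
  | @insert e s he hfin ih =>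
    obtain ⟨hes, hsub⟩ := Set.insert_subset_iff.mp hs
    induction e using Sym2.ind with
    | _ u v =>
    have huv : (G.deleteEdges s).Adj u v := by simpa [he] using hes
    have hb := isAcyclic_iff_forall_adj_isBridge.mp (hG.anti (deleteEdges_le s)) huv
    rw [← Set.union_singleton, ← deleteEdges_deleteEdges,
      card_connectedComponent_deleteEdges_of_isBridge huv hb, ih hsub, Set.union_singleton,
      Set.ncard_insert_of_notMem he, add_assoc]

theorem IsTree.card_connectedComponent_deleteEdges [Finite V] (hG : G.IsTree)
    {s : Set (Sym2 V)} (hs : s ⊆ G.edgeSet) :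
    Nat.card (G.deleteEdges s).ConnectedComponent = s.ncard + 1 := by
  rw [hG.isAcyclic.card_connectedComponent_deleteEdges hs, hG.connected.card_connectedComponent,
    add_comm]

end SimpleGraph

theorem Function.injective_iff_forall_ncard_preimage_singleton_eq_one {α β : Type*}
    {f : α → β} :
    f.Injective ↔ ∀ b ∈ Set.range f, (f ⁻¹' {b}).ncard = 1 := by
  refine ⟨?_, fun h a a' haa' => ?_⟩
  · rintro hf _ ⟨a, rfl⟩
    rw [← Set.image_singleton, hf.preimage_image, Set.ncard_singleton]
  · obtain ⟨c, hc⟩ := Set.ncard_eq_one.mp (h (f a) ⟨a, rfl⟩)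
    have ha : a ∈ f ⁻¹' {f a} := rfl
    have ha' : a' ∈ f ⁻¹' {f a} := haa'.symm
    rw [hc] at ha ha'
    exact ha.trans ha'.symm

theorem Finite.injective_iff_card_eq_ncard_range {α β : Type*} [Finite α] {f : α → β} :
    f.Injective ↔ Nat.card α = (Set.range f).ncard := by
  rw [← Set.image_univ, ← Set.ncard_univ, eq_comm, Set.ncard_image_iff, Set.injOn_univ]

namespace PhyloMP

section Coloring

variable {V C : Type} {g : SimpleGraph V} {ω : V → C}

theorem mk_mem_mutationEdges {a b : V} :
    s(a, b) ∈ mutationEdges g ω ↔ g.Adj a b ∧ ω a ≠ ω b := by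
  refine ⟨?_, fun ⟨hab, hne⟩ => ⟨hab, a, b, rfl, hne⟩⟩
  rintro ⟨hab, u, v, huv, hne⟩
  rcases Sym2.eq_iff.mp huv with ⟨rfl, rfl⟩ | ⟨rfl, rfl⟩
  exacts [⟨hab, hne⟩, ⟨hab, hne.symm⟩]

theorem deleteEdges_mutationEdges_adj {a b : V} :
    (g.deleteEdges (mutationEdges g ω)).Adj a b ↔ g.Adj a b ∧ ω a = ω b := by
  rw [deleteEdges_adj, mk_mem_mutationEdges]
  tauto

theorem connectedComponentMk_eq_of_adj_of_eq {a b : V} (hab : g.Adj a b) (h : ω a = ω b) :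
    (g.deleteEdges (mutationEdges g ω)).connectedComponentMk a =
      (g.deleteEdges (mutationEdges g ω)).connectedComponentMk b :=
  ConnectedComponent.connectedComponentMk_eq_of_adj (deleteEdges_mutationEdges_adj.mpr ⟨hab, h⟩)

theorem eq_of_reachable_deleteEdges_mutationEdges {a b : V}
    (h : (g.deleteEdges (mutationEdges g ω)).Reachable a b) : ω a = ω b :=
  h.eq_of_forall_adj fun _ _ hab => (deleteEdges_mutationEdges_adj.mp hab).2

def componentState (g : SimpleGraph V) (ω : V → C) :
    (g.deleteEdges (mutationEdges g ω)).ConnectedComponent → C :=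
  ConnectedComponent.lift ω fun _ _ p _ => eq_of_reachable_deleteEdges_mutationEdges p.reachable

@[simp]
theorem componentState_mk (v : V) :
    componentState g ω ((g.deleteEdges (mutationEdges g ω)).connectedComponentMk v) = ω v :=
  rfl

theorem stateMultiplicity_eq_ncard_preimage (s : C) :
    stateMultiplicity (g.deleteEdges (mutationEdges g ω)) ω s =
      (componentState g ω ⁻¹' {s}).ncard := by
  unfold stateMultiplicity
  congr 1
  ext c
  induction c using ConnectedComponent.ind with
  | _ a =>
    refine ⟨fun ⟨v, hv, hvs⟩ => ?_, fun has => ⟨a, rfl, has⟩⟩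
    rw [Set.mem_preimage, componentState_mk, Set.mem_singleton_iff, ← hvs]
    exact (eq_of_reachable_deleteEdges_mutationEdges (ConnectedComponent.exact hv)).symm

open Classical in
theorem mutationEdges_recolor_ssubset {p q : V} (hpq : g.Adj p q)
    {c : (g.deleteEdges (mutationEdges g ω)).ConnectedComponent}
    (hp : (g.deleteEdges (mutationEdges g ω)).connectedComponentMk p = c)
    (hq : (g.deleteEdges (mutationEdges g ω)).connectedComponentMk q ≠ c) :
    mutationEdges g
        (fun w => if (g.deleteEdges (mutationEdges g ω)).connectedComponentMk w = c then ω q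
          else ω w) ⊂ mutationEdges g ω := by
  refine ⟨fun e he => ?_, fun hsub => ?_⟩
  · induction e using Sym2.ind with
    | _ a b =>
      obtain ⟨hab, hne⟩ := mk_mem_mutationEdges.mp he
      refine mk_mem_mutationEdges.mpr ⟨hab, fun heq => hne ?_⟩
      simp only [connectedComponentMk_eq_of_adj_of_eq hab heq, heq]
  · have hpq_ne : ω p ≠ ω q := fun h =>
      hq ((connectedComponentMk_eq_of_adj_of_eq hpq h).symm.trans hp)
    obtain ⟨-, hne⟩ :=
      mk_mem_mutationEdges.mp (hsub (mk_mem_mutationEdges.mpr ⟨hpq, hpq_ne⟩))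
    simp [hp, hq] at hne

end Coloring

variable {X V C : Type} [Fintype V]

theorem XTree.nonempty (T : XTree X V) : Nonempty X := by
  classical
  obtain ⟨v, hv⟩ : ∃ v, (T.g.neighborSet v).ncard = 1 := by
    rcases subsingleton_or_nontrivial V with hV | hV
    · obtain ⟨v⟩ := T.isTree.connected.nonempty
      have hempty : T.g.neighborSet v = ∅ := Set.eq_empty_of_forall_notMem fun w hw =>
        T.g.loopless.irrefl _ (Subsingleton.elim v w ▸ hw)
      simpa [hempty] using T.internalDeg v (by simp)
    · obtain ⟨v, hv⟩ := T.isTree.exists_vert_degree_one_of_nontrivial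
      refine ⟨v, ?_⟩
      rw [Set.ncard_eq_toFinset_card', Set.toFinset_card, card_neighborSet_eq_degree, hv]
  exact ⟨(T.leavesOnly v hv).choose⟩

theorem score_le_of_isExtension {T : XTree X V} {χ : X → C} {ω : V → C}
    (hω : IsExtension T χ ω) : score T χ ≤ (mutationEdges T.g ω).ncard :=
  Nat.sInf_le ⟨ω, hω, rfl⟩

theorem IsMPExtension.exists_reachable_leaf {T : XTree X V} {χ : X → C} {ω : V → C}
    (hω : IsMPExtension T χ ω) (v : V) : ∃ x, (forest T ω).Reachable v (T.leaf x) := by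
  classical
  by_contra! hno
  set F := forest T ω
  set c := F.connectedComponentMk v
  have hleaf : ∀ x, F.connectedComponentMk (T.leaf x) ≠ c := fun x hx =>
    hno x (ConnectedComponent.exact hx.symm)
  obtain ⟨x⟩ := T.nonempty
  obtain ⟨p⟩ := T.isTree.connected.preconnected v (T.leaf x)
  obtain ⟨d, -, hd, hd'⟩ :=
    p.exists_boundary_dart {w | F.connectedComponentMk w = c} rfl (hleaf x)
  have hext : IsExtension T χ
      (fun w => if F.connectedComponentMk w = c then ω d.snd else ω w) := fun y => by
    simpa [hleaf y] using hω.1 y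
  have hlt := Set.ncard_lt_ncard (mutationEdges_recolor_ssubset d.adj hd hd')
  exact (score_le_of_isExtension hext).not_gt (hω.2 ▸ hlt)

theorem IsMPExtension.range_componentState {T : XTree X V} {χ : X → C} {ω : V → C}
    (hω : IsMPExtension T χ ω) : Set.range (componentState T.g ω) = Set.range χ := by
  refine Set.Subset.antisymm ?_ fun _ ⟨x, hx⟩ =>
    ⟨_, (componentState_mk _).trans ((hω.1 x).trans hx)⟩
  rintro _ ⟨c, rfl⟩
  induction c using ConnectedComponent.ind with
  | _ v =>
    obtain ⟨x, hx⟩ := hω.exists_reachable_leaf v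
    exact ⟨x, (hω.1 x).symm.trans (eq_of_reachable_deleteEdges_mutationEdges hx).symm⟩

theorem IsMPExtension.card_connectedComponent_forest {T : XTree X V} {χ : X → C} {ω : V → C}
    (hω : IsMPExtension T χ ω) : Nat.card (forest T ω).ConnectedComponent = score T χ + 1 := by
  rw [← hω.2]
  exact T.isTree.card_connectedComponent_deleteEdges fun _ he => he.1

end PhyloMP

open PhyloMP in
/-- `χ` is convex on `T` iff every state of `χ` is carried by exactly one
component of the forest induced by a most parsimonious extension. -/
theorem stmt_7 {X V C : Type} [Fintype V] (T : XTree X V) (χ : X → C) (ω : V → C)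
    (hω : IsMPExtension T χ ω) :
    IsConvex T χ ↔ ∀ s ∈ Set.range χ, stateMultiplicity (forest T ω) ω s = 1 := by
  have hcard := hω.card_connectedComponent_forest
  unfold forest at hcard
  unfold IsConvex nStates forest
  simp only [stateMultiplicity_eq_ncard_preimage, ← hω.range_componentState]
  rw [← Function.injective_iff_forall_ncard_preimage_singleton_eq_one,
    Finite.injective_iff_card_eq_ncard_range, hcard]
  have hpos : 0 < (Set.range (componentState T.g ω)).ncard := by
    obtain ⟨v⟩ := T.isTree.connected.nonempty
    exact (Set.ncard_pos (Set.toFinite _)).mpr ⟨_, _, componentState_mk v⟩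
  omega
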